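/- Let H be a finite group, N a normal subgroup, and χ ∈ ℤIrr(N) a virtual character of N. Then for every g ∈ H, the value of the induced virtual character χ↑^H at g lies in [Stab_H(χ) : N]·O, where O is the ring of integers of a field containing the relevant character values (i.e., χ↑^H(g) is [Stab_H(χ):N] times an algebraic integer). -/

import Mathlib

open scoped Classical

/-- `χ : G → ℂ` is an irreducible character: it is the character of a simple
finite-dimensional complex representation of `G`. -/
def IsIrrChar (G : Type) [Group G] (χ : G → ℂ) : Prop :=
  ∃ V : FDRep ℂ G, CategoryTheory.Simple V ∧ χ = V.character

/-- The induced class function `f↑^G` of `f : H → ℂ`. -/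
noncomputable def indChar {G : Type} [Group G] [Fintype G] (H : Subgroup G) (f : H → ℂ) :
    G → ℂ :=
  fun g => (Nat.card H : ℂ)⁻¹ *
    ∑ x : G, if h : x * g * x⁻¹ ∈ H then f ⟨x * g * x⁻¹, h⟩ else 0

/-- The stabiliser in `H` of a class function `χ` of the normal subgroup `N`. -/
def charStab {H : Type} [Group H] (N : Subgroup H) (hN : N.Normal) (χ : ↥N → ℂ) :
    Subgroup H where
  carrier := {h : H | ∀ (n : H) (hn : n ∈ N) (hn' : h * n * h⁻¹ ∈ N),
    χ ⟨h * n * h⁻¹, hn'⟩ = χ ⟨n, hn⟩}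
  one_mem' := by
    intro n hn hn'
    congr 1
    exact Subtype.ext (by group)
  mul_mem' := by
    intro a b ha hb n hn hn'
    have hbn : b * n * b⁻¹ ∈ N := hN.conj_mem n hn b
    have h2 : a * (b * n * b⁻¹) * a⁻¹ ∈ N := hN.conj_mem _ hbn a
    have e1 : χ ⟨a * b * n * (a * b)⁻¹, hn'⟩ = χ ⟨a * (b * n * b⁻¹) * a⁻¹, h2⟩ := by
      congr 1
      exact Subtype.ext (by group)
    rw [e1, ha _ hbn h2, hb _ hn hbn]
  inv_mem' := by
    intro a ha n hn hn'
    have h3 : a * (a⁻¹ * n * a⁻¹⁻¹) * a⁻¹ ∈ N := by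
      have he : a * (a⁻¹ * n * a⁻¹⁻¹) * a⁻¹ = n := by group
      rw [he]
      exact hn
    have h4 := ha _ hn' h3
    rw [← h4]
    congr 1
    exact Subtype.ext (by group)

/-!
Values of characters of a finite group are sums of roots of unity, hence algebraic integers,
and so are the values of a virtual character. For `g ∈ N`, writing `χ↑^H(g)` as
`|N|⁻¹ ∑_{x ∈ H} χ(x⁻¹ g x)`, the summand only depends on the coset `x · Stab_H(χ)`, so the sum
is `|Stab_H(χ)|` times a sum of values of `χ`, and `|Stab_H(χ)| / |N| = [Stab_H(χ) : N]`
because `N ≤ Stab_H(χ)` for a class function `χ`.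
-/

theorem Module.End.pow_eq_one_of_hasEigenvalue {K V : Type*} [Field K] [AddCommGroup V]
    [Module K V] {f : Module.End K V} {n : ℕ} (hf : f ^ n = 1) {μ : K}
    (hμ : f.HasEigenvalue μ) : μ ^ n = 1 := by
  obtain ⟨v, hv⟩ := (hμ.pow n).exists_hasEigenvector
  have h : μ ^ n • v = (1 : K) • v := by rw [← hv.apply_eq_smul, hf, one_smul]; rfl
  exact smul_left_injective K hv.2 h

theorem Module.End.isIntegral_trace_of_pow_eq_one {K V : Type*} [Field K] [IsAlgClosed K]
    [AddCommGroup V] [Module K V] [FiniteDimensional K V] {f : Module.End K V} {n : ℕ}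
    (hn : 0 < n) (hf : f ^ n = 1) : IsIntegral ℤ (LinearMap.trace K V f) := by
  rw [Module.End.trace_eq_sum_roots_charpoly_of_splits (IsAlgClosed.splits _)]
  refine IsIntegral.multiset_sum fun μ hμ => IsIntegral.of_pow hn ?_
  have hroot := (Polynomial.mem_roots f.charpoly_monic.ne_zero).1 hμ
  rw [pow_eq_one_of_hasEigenvalue hf ((f.hasEigenvalue_iff_isRoot_charpoly μ).2 hroot)]
  exact isIntegral_one

theorem FDRep.isIntegral_character {K G : Type*} [Field K] [IsAlgClosed K] [Group G] [Finite G]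
    (V : FDRep K G) (g : G) : IsIntegral ℤ (V.character g) :=
  Module.End.isIntegral_trace_of_pow_eq_one Nat.card_pos <| by
    rw [← map_pow, pow_card_eq_one', map_one]

theorem IsIrrChar.isIntegral {G : Type} [Group G] [Finite G] {χ : G → ℂ} (hχ : IsIrrChar G χ)
    (g : G) : IsIntegral ℤ (χ g) := by
  obtain ⟨V, -, rfl⟩ := hχ
  exact V.isIntegral_character g

theorem IsIrrChar.conj {G : Type} [Group G] {χ : G → ℂ} (hχ : IsIrrChar G χ) (g h : G) :
    χ (h * g * h⁻¹) = χ g := by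
  obtain ⟨V, -, rfl⟩ := hχ
  exact V.char_conj g h

theorem Subgroup.sum_eq_card_nsmul_sum_quotient {G M : Type*} [Group G] [Fintype G]
    [AddCommMonoid M] (S : Subgroup G) {F : G → M} (hF : ∀ x, ∀ s ∈ S, F (x * s) = F x) :
    ∑ x, F x = Nat.card S • ∑ q : G ⧸ S, F q.out := by
  rw [← Fintype.sum_fiberwise (QuotientGroup.mk : G → G ⧸ S) F, Finset.smul_sum]
  refine Finset.sum_congr rfl fun q _ => ?_
  have hfib : ∀ x : {x : G // (x : G ⧸ S) = q}, F x = F q.out := fun ⟨x, hx⟩ => by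
    have : q.out⁻¹ * x ∈ S := QuotientGroup.eq.1 (by rw [hx, QuotientGroup.out_eq'])
    simpa using hF q.out _ this
  rw [Fintype.sum_congr _ _ hfib, Finset.sum_const, Finset.card_univ, ← Nat.card_eq_fintype_card]
  congr 1
  exact (QuotientGroup.card_preimage_mk S {q}).trans (by simp)

section Induction

variable {H : Type} [Group H] {N : Subgroup H}

theorem le_charStab (hN : N.Normal) {χ : N → ℂ} (hχ : ∀ a b : N, χ (a * b * a⁻¹) = χ b) :
    N ≤ charStab N hN χ :=
  fun n hn m hm _ => hχ ⟨n, hn⟩ ⟨m, hm⟩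

theorem indChar_eq_zero_of_notMem [Fintype H] (hN : N.Normal) (f : N → ℂ) {g : H} (hg : g ∉ N) :
    indChar N f g = 0 := by
  refine mul_eq_zero_of_right _ (Finset.sum_eq_zero fun x _ => dif_neg fun hx => hg ?_)
  convert hN.conj_mem' _ hx x using 1
  group

theorem indChar_eq_relIndex_mul_sum [Fintype H] (hN : N.Normal) {χ : N → ℂ}
    (hχ : ∀ a b : N, χ (a * b * a⁻¹) = χ b) {g : H} (hg : g ∈ N) :
    indChar N χ g = N.relIndex (charStab N hN χ) *
      ∑ q : H ⧸ charStab N hN χ, χ ⟨q.out⁻¹ * g * q.out, hN.conj_mem' g hg q.out⟩ := by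
  set S := charStab N hN χ
  let F : H → ℂ := fun x => χ ⟨x⁻¹ * g * x, hN.conj_mem' g hg x⟩
  have hF : ∀ x, ∀ s ∈ S, F (x * s) = F x := fun x s hs => by
    have hmem : s⁻¹ * (x⁻¹ * g * x) * s⁻¹⁻¹ ∈ N := by
      convert hN.conj_mem' g hg (x * s) using 1; group
    calc F (x * s) = χ ⟨s⁻¹ * (x⁻¹ * g * x) * s⁻¹⁻¹, hmem⟩ := congrArg χ (Subtype.ext (by group))
      _ = F x := (S.inv_mem hs : s⁻¹ ∈ charStab N hN χ) _ (hN.conj_mem' g hg x) hmem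
  have hsum : ∑ x : H, (if h : x * g * x⁻¹ ∈ N then χ ⟨x * g * x⁻¹, h⟩ else 0) = ∑ x, F x :=
    Fintype.sum_equiv (Equiv.inv H) _ _ fun x => by
      simp [F, dif_pos (by simpa using hN.conj_mem' g hg x⁻¹ : x * g * x⁻¹ ∈ N)]
  have hcard : Nat.card S = Nat.card N * N.relIndex S := by
    rw [← Subgroup.relIndex_bot_left, ← Subgroup.relIndex_bot_left,
      Subgroup.relIndex_mul_relIndex _ _ _ bot_le (le_charStab hN hχ)]
  rw [indChar, hsum, S.sum_eq_card_nsmul_sum_quotient hF, nsmul_eq_mul, hcard, Nat.cast_mul,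
    mul_assoc, inv_mul_cancel_left₀ (Nat.cast_ne_zero.2 Nat.card_pos.ne')]

theorem exists_isIntegral_indChar_eq_relIndex_mul [Fintype H] (hN : N.Normal) {χ : N → ℂ}
    (hχ : ∀ a b : N, χ (a * b * a⁻¹) = χ b) (hint : ∀ n, IsIntegral ℤ (χ n)) (g : H) :
    ∃ α : ℂ, IsIntegral ℤ α ∧ indChar N χ g = N.relIndex (charStab N hN χ) * α := by
  by_cases hg : g ∈ N
  · exact ⟨_, IsIntegral.sum _ fun q _ => hint _, indChar_eq_relIndex_mul_sum hN hχ hg⟩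
  · exact ⟨0, isIntegral_zero, by rw [indChar_eq_zero_of_notMem hN χ hg, mul_zero]⟩

end Induction

/-- for a virtual character `χ ∈ ℤIrr(N)` of a normal subgroup `N` of a
finite group `H`, every value of the induced virtual character `χ↑^H` is
`[Stab_H(χ) : N]` times an algebraic integer. -/
theorem stmt16 (H : Type) [Group H] [Fintype H] (N : Subgroup H) (hN : N.Normal)
    (χ : ↥N → ℂ)
    (hχ : ∃ (s : Finset (↥N → ℂ)) (c : (↥N → ℂ) → ℤ),
      (∀ f ∈ s, IsIrrChar ↥N f) ∧ χ = ∑ f ∈ s, c f • f) :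
    ∀ g : H, ∃ α : ℂ, IsIntegral ℤ α ∧
      indChar N χ g = (N.relIndex (charStab N hN χ) : ℂ) * α := by
  obtain ⟨s, c, hirr, rfl⟩ := hχ
  refine exists_isIntegral_indChar_eq_relIndex_mul hN (fun a b => ?_) (fun n => ?_)
  · simp only [Finset.sum_apply, Pi.smul_apply]
    exact Finset.sum_congr rfl fun f hf => by rw [(hirr f hf).conj]
  · simp only [Finset.sum_apply, zsmul_eq_mul]
    exact IsIntegral.sum _ fun f hf =>
      (isIntegral_algebraMap (x := c f)).mul ((hirr f hf).isIntegral n)
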